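/- Positivity of the first-order 1D well-balanced DG scheme with gravity source (Theorem 3.2): let Ū_{j−1}, Ū_j = (ρ̄_j, m̄_j, Ē_j), Ū_{j+1} ∈ G, let p̄^e_{j−1}, p̄^e_j, p̄^e_{j+1} > 0, p^{e,⋆}_{j−1/2}, p^{e,⋆}_{j+1/2} > 0, and ρ̄^e_j > 0. Define the modified HLLC fluxes F̂_{j+1/2} = F^hllc((p^{e,⋆}_{j+1/2}/p̄^e_j) Ū_j, (p^{e,⋆}_{j+1/2}/p̄^e_{j+1}) Ū_{j+1}) and F̂_{j−1/2} = F^hllc((p^{e,⋆}_{j−1/2}/p̄^e_{j−1}) Ū_{j−1}, (p^{e,⋆}_{j−1/2}/p̄^e_j) Ū_j), the discretized source S̄_j = ((p^{e,⋆}_{j+1/2} − p^{e,⋆}_{j−1/2})/(h ρ̄^e_j)) · (0, ρ̄_j, m̄_j), the specific internal energy ē_j = (Ē_j − m̄_j²/(2ρ̄_j))/ρ̄_j, and the constants α̂^F_j = 2((p^{e,⋆}_{j+1/2} + p^{e,⋆}_{j−1/2})/p̄^e_j) · max{α_max(Ū_{j−1}), α_max(Ū_j), α_max(Ū_{j+1})}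 and α̂^S_j = |p^{e,⋆}_{j+1/2} − p^{e,⋆}_{j−1/2}|/(ρ̄^e_j √(2ē_j)). If Δt > 0 and h > 0 satisfy (α̂^F_j + α̂^S_j)·Δt ≤ h, then Ū_j − (Δt/h)(F̂_{j+1/2} − F̂_{j−1/2}) + Δt·S̄_j ∈ G. -/

import Mathlib

noncomputable section

/-- A 1D state `U = (ρ, m, E)`. -/
abbrev St : Type := ℝ × ℝ × ℝ

/-- The admissible set `G = {(ρ, m, E) : ρ > 0, E − m²/(2ρ) > 0}`. -/
def admG : Set St := {U | 0 < U.1 ∧ 0 < U.2.2 - U.2.1 ^ 2 / (2 * U.1)}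

/-- The velocity `u = m/ρ`. -/
def vel (U : St) : ℝ := U.2.1 / U.1

/-- The pressure `p = (γ−1)(E − m²/(2ρ))`. -/
def press (γ : ℝ) (U : St) : ℝ := (γ - 1) * (U.2.2 - U.2.1 ^ 2 / (2 * U.1))

/-- The sound speed `√(γ p / ρ)`. -/
def sound (γ : ℝ) (U : St) : ℝ := Real.sqrt (γ * press γ U / U.1)

/-- The specific internal energy `e = (E − m²/(2ρ))/ρ`. -/
def specE (U : St) : ℝ := (U.2.2 - U.2.1 ^ 2 / (2 * U.1)) / U.1

/-- The Euler flux `F(U) = (ρu, ρu² + p, (E+p)u)`. -/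
def eulerF (γ : ℝ) (U : St) : St :=
  (U.1 * vel U, U.1 * vel U ^ 2 + press γ U, (U.2.2 + press γ U) * vel U)

/-- `α₋(U) = u − √(γp/ρ)`. -/
def alphaMinus (γ : ℝ) (U : St) : ℝ := vel U - sound γ U

/-- `α₊(U) = u + √(γp/ρ)`. -/
def alphaPlus (γ : ℝ) (U : St) : ℝ := vel U + sound γ U

/-- `α_max(U) = |u| + √(γp/ρ)`. -/
def alphaMax (γ : ℝ) (U : St) : ℝ := |vel U| + sound γ U

/-- Left wave speed `S_L = min(α₋(U_L), α₋(U_R))`. -/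
def SL (γ : ℝ) (UL UR : St) : ℝ := min (alphaMinus γ UL) (alphaMinus γ UR)

/-- Right wave speed `S_R = max(α₊(U_L), α₊(U_R))`. -/
def SR (γ : ℝ) (UL UR : St) : ℝ := max (alphaPlus γ UL) (alphaPlus γ UR)

/-- Middle wave speed `S_*`. -/
def Sstar (γ : ℝ) (UL UR : St) : ℝ :=
  (press γ UR - press γ UL + UL.1 * vel UL * (SL γ UL UR - vel UL)
      - UR.1 * vel UR * (SR γ UL UR - vel UR)) /
    (UL.1 * (SL γ UL UR - vel UL) - UR.1 * (SR γ UL UR - vel UR))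

/-- HLLC intermediate state
`U_{*i} = ρ_i (S_i − u_i)/(S_i − S_*) · (1, S_*, E_i/ρ_i + (S_* − u_i)(S_* + p_i/(ρ_i(S_i − u_i))))`. -/
def Ustar (γ : ℝ) (Si Sst : ℝ) (Ui : St) : St :=
  (Ui.1 * ((Si - vel Ui) / (Si - Sst))) •
    (((1 : ℝ), Sst,
      Ui.2.2 / Ui.1 + (Sst - vel Ui) * (Sst + press γ Ui / (Ui.1 * (Si - vel Ui)))) : St)

/-- Intermediate flux `F_{*i} = F(U_i) + S_i (U_{*i} − U_i)`. -/
def Fstar (γ : ℝ) (Si Sst : ℝ) (Ui : St) : St :=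
  eulerF γ Ui + Si • (Ustar γ Si Sst Ui - Ui)

/-- The HLLC numerical flux. -/
def Fhllc (γ : ℝ) (UL UR : St) : St :=
  if 0 ≤ SL γ UL UR then eulerF γ UL
  else if 0 ≤ Sstar γ UL UR then Fstar γ (SL γ UL UR) (Sstar γ UL UR) UL
  else if 0 ≤ SR γ UL UR then Fstar γ (SR γ UL UR) (Sstar γ UL UR) UR
  else eulerF γ UR

end

/-! The admissible set `G` is a convex cone. The HLLC flux is the flux through `x = 0` of a
three-wave fan whose intermediate states lie in `G` and which satisfies the Rankine–Hugoniot
relations across each wave, so once `α` bounds the wave speeds, `α U_L - (F^hllc - F(U_L))` and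
`α U_R - (F(U_R) - F^hllc)` are nonnegative combinations of states of the fan. Rescaling a state
leaves its wave speeds unchanged and scales its Euler flux, so this applies to the rescaled states
of the well-balanced fluxes. The update is `Δt/h` times these two interface terms plus
`c U_j - ν (F(U_j) - k (0, ρ_j, m_j))` with `k = p̄ᵉ_j / ρ̄ᵉ_j`, whose internal energy is explicit;
the part of the CFL budget left to `c` makes that last state admissible. -/

section RiemannFan

variable {V : Type*} [AddCommGroup V] [Module ℝ V] (C : ConvexCone ℝ V)

lemma ConvexCone.smul_add_mem {a : ℝ} {x y : V} (ha : 0 ≤ a) (hx : x ∈ C) (hy : y ∈ C) :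
    a • x + y ∈ C := by
  rcases ha.eq_or_lt with rfl | ha
  · simpa using hy
  · exact C.add_mem (C.smul_mem ha hx) hy

/-- The flux through `x = 0` of the self-similar solution taking the values `W₀, W₁, W₂, W₃`
separated by waves of speeds `s₁ ≤ s₂ ≤ s₃`, when the fluxes of the outer states are `f₀, f₃`
and those of the inner states are given by the Rankine–Hugoniot relations. -/
noncomputable def fanFlux (s₁ s₂ s₃ : ℝ) (W₀ W₁ W₂ W₃ f₀ f₃ : V) : V :=
  if 0 ≤ s₁ then f₀
  else if 0 ≤ s₂ then f₀ + s₁ • (W₁ - W₀)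
  else if 0 ≤ s₃ then f₃ + s₃ • (W₂ - W₃)
  else f₃

variable {C} {W₀ W₁ W₂ W₃ f₀ f₃ : V} {s₁ s₂ s₃ α : ℝ}

theorem fanFlux_left_mem (h₀ : W₀ ∈ C) (h₁ : W₁ ∈ C) (h₂ : W₂ ∈ C) (h₃ : W₃ ∈ C)
    (hs₁₂ : s₁ ≤ s₂) (hs₂₃ : s₂ ≤ s₃)
    (hf : f₃ = f₀ + s₁ • (W₁ - W₀) + s₂ • (W₂ - W₁) + s₃ • (W₃ - W₂))
    (hα : 0 < α) (hα₁ : -α ≤ s₁) :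
    α • W₀ - (fanFlux s₁ s₂ s₃ W₀ W₁ W₂ W₃ f₀ f₃ - f₀) ∈ C := by
  have hα₁' : 0 ≤ α + s₁ := by linarith
  unfold fanFlux
  split_ifs with hs₁ hs₂ hs₃
  · simpa using C.smul_mem hα h₀
  · convert C.smul_add_mem hα₁' h₀ (C.smul_mem (neg_pos.2 (not_le.1 hs₁)) h₁) using 1
    module
  · convert C.smul_add_mem hα₁' h₀ (C.smul_add_mem (sub_nonneg.2 hs₁₂) h₁
      (C.smul_mem (neg_pos.2 (not_le.1 hs₂)) h₂)) using 1
    rw [hf]; module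
  · convert C.smul_add_mem hα₁' h₀ (C.smul_add_mem (sub_nonneg.2 hs₁₂) h₁
      (C.smul_add_mem (sub_nonneg.2 hs₂₃) h₂ (C.smul_mem (neg_pos.2 (not_le.1 hs₃)) h₃))) using 1
    rw [hf]; module

theorem fanFlux_right_mem (h₀ : W₀ ∈ C) (h₁ : W₁ ∈ C) (h₂ : W₂ ∈ C) (h₃ : W₃ ∈ C)
    (hs₁₂ : s₁ ≤ s₂) (hs₂₃ : s₂ < s₃)
    (hf : f₃ = f₀ + s₁ • (W₁ - W₀) + s₂ • (W₂ - W₁) + s₃ • (W₃ - W₂))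
    (hα : 0 < α) (hα₃ : s₃ ≤ α) :
    α • W₃ - (f₃ - fanFlux s₁ s₂ s₃ W₀ W₁ W₂ W₃ f₀ f₃) ∈ C := by
  have hα₃' : 0 ≤ α - s₃ := by linarith
  unfold fanFlux
  split_ifs with hs₁ hs₂ hs₃
  · convert C.smul_add_mem hα₃' h₃ (C.smul_add_mem hs₁ h₀ (C.smul_add_mem (sub_nonneg.2 hs₁₂) h₁
      (C.smul_mem (sub_pos.2 hs₂₃) h₂))) using 1
    rw [hf]; module
  · convert C.smul_add_mem hα₃' h₃ (C.smul_add_mem hs₂ h₁ (C.smul_mem (sub_pos.2 hs₂₃) h₂))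
      using 1
    rw [hf]; module
  · rcases hs₃.eq_or_lt with hs₃ | hs₃
    · simpa [← hs₃] using C.smul_mem hα h₃
    · convert C.smul_add_mem hα₃' h₃ (C.smul_mem hs₃ h₂) using 1
      module
  · simpa using C.smul_mem hα h₃

end RiemannFan

section Admissible

lemma admG_add {U V : St} (hU : U ∈ admG) (hV : V ∈ admG) : U + V ∈ admG := by
  obtain ⟨ρ, m, E⟩ := U
  obtain ⟨ρ', m', E'⟩ := V
  obtain ⟨hρ, he⟩ := hU
  obtain ⟨hρ', he'⟩ := hV
  dsimp only at hρ he hρ' he'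
  refine ⟨add_pos hρ hρ', ?_⟩
  show 0 < E + E' - (m + m') ^ 2 / (2 * (ρ + ρ'))
  -- joint convexity of the kinetic energy `m² / (2ρ)`
  have key : E + E' - (m + m') ^ 2 / (2 * (ρ + ρ'))
      = (E - m ^ 2 / (2 * ρ)) + (E' - m' ^ 2 / (2 * ρ'))
        + (m * ρ' - m' * ρ) ^ 2 / (2 * ρ * ρ' * (ρ + ρ')) := by
    field_simp
    ring
  rw [key]
  positivity

lemma admG_smul {c : ℝ} (hc : 0 < c) {U : St} (hU : U ∈ admG) : c • U ∈ admG := by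
  obtain ⟨ρ, m, E⟩ := U
  obtain ⟨hρ, he⟩ := hU
  dsimp only at hρ he
  refine ⟨mul_pos hc hρ, ?_⟩
  show 0 < c * E - (c * m) ^ 2 / (2 * (c * ρ))
  have key : c * E - (c * m) ^ 2 / (2 * (c * ρ)) = c * (E - m ^ 2 / (2 * ρ)) := by
    field_simp
  rw [key]
  positivity

def admCone : ConvexCone ℝ St where
  carrier := admG
  smul_mem' _ hc _ hU := admG_smul hc hU
  add_mem' _ hU _ hV := admG_add hU hV

lemma mem_admG_iff {U : St} : U ∈ admG ↔ 0 < U.1 ∧ 0 < specE U := by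
  refine and_congr_right fun hρ => ?_
  rw [specE, div_pos_iff_of_pos_right hρ]

end Admissible

section Thermodynamics

variable {γ : ℝ} {U V : St}

lemma press_pos (hγ : 1 < γ) (hU : U ∈ admG) : 0 < press γ U :=
  mul_pos (sub_pos.2 hγ) hU.2

lemma press_eq_mul_specE (hU : U ∈ admG) : press γ U = (γ - 1) * U.1 * specE U := by
  rw [press, specE]
  field_simp [hU.1.ne']

lemma sound_sq (hγ : 1 < γ) (hU : U ∈ admG) : sound γ U ^ 2 = γ * (γ - 1) * specE U := by
  rw [sound, Real.sq_sqrt (div_nonneg (by nlinarith [press_pos hγ hU]) hU.1.le),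
    press_eq_mul_specE hU]
  field_simp [hU.1.ne']

lemma mul_sound_sq (hγ : 1 < γ) (hU : U ∈ admG) : U.1 * sound γ U ^ 2 = γ * press γ U := by
  rw [sound_sq hγ hU, press_eq_mul_specE hU]
  ring

lemma sound_pos (hγ : 1 < γ) (hU : U ∈ admG) : 0 < sound γ U :=
  Real.sqrt_pos.2 (div_pos (mul_pos (by linarith) (press_pos hγ hU)) hU.1)

lemma alphaMax_pos (hγ : 1 < γ) (hU : U ∈ admG) : 0 < alphaMax γ U :=
  add_pos_of_nonneg_of_pos (abs_nonneg _) (sound_pos hγ hU)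

lemma press_le_mul_sound (hγ : 1 < γ) (hU : U ∈ admG) :
    press γ U ≤ U.1 * √(2 * specE U) * sound γ U := by
  have he := (mem_admG_iff.1 hU).2
  refine (pow_le_pow_iff_left₀ (press_pos hγ hU).le
    (mul_nonneg (mul_nonneg hU.1.le (Real.sqrt_nonneg _)) (sound_pos hγ hU).le) two_ne_zero).1 ?_
  rw [mul_pow, mul_pow, sound_sq hγ hU, Real.sq_sqrt (by positivity), press_eq_mul_specE hU]
  nlinarith [mul_pos hU.1 he, mul_pos (mul_pos hU.1 he) (mul_pos hU.1 he)]

lemma vel_smul {c : ℝ} (hc : c ≠ 0) (U : St) : vel (c • U) = vel U :=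
  mul_div_mul_left _ _ hc

lemma press_smul {c : ℝ} (hc : c ≠ 0) (U : St) : press γ (c • U) = c * press γ U := by
  obtain ⟨ρ, m, E⟩ := U
  show (γ - 1) * (c * E - (c * m) ^ 2 / (2 * (c * ρ))) = c * ((γ - 1) * (E - m ^ 2 / (2 * ρ)))
  rcases eq_or_ne ρ 0 with rfl | hρ
  · simp; ring
  · field_simp

lemma sound_smul {c : ℝ} (hc : c ≠ 0) (U : St) : sound γ (c • U) = sound γ U := by
  rw [sound, sound, press_smul hc]
  show √(γ * (c * press γ U) / (c * U.1)) = _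
  rw [mul_left_comm, mul_div_mul_left _ _ hc]

lemma eulerF_smul {c : ℝ} (hc : c ≠ 0) (U : St) : eulerF γ (c • U) = c • eulerF γ U := by
  simp only [eulerF, vel_smul hc, press_smul hc, Prod.smul_mk, Prod.smul_fst, Prod.smul_snd,
    smul_eq_mul, Prod.mk.injEq]
  refine ⟨?_, ?_, ?_⟩ <;> ring

lemma SL_smul {c d : ℝ} (hc : c ≠ 0) (hd : d ≠ 0) (U V : St) :
    SL γ (c • U) (d • V) = SL γ U V := by
  simp only [SL, alphaMinus, vel_smul, sound_smul, hc, hd, ne_eq, not_false_eq_true]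

lemma SR_smul {c d : ℝ} (hc : c ≠ 0) (hd : d ≠ 0) (U V : St) :
    SR γ (c • U) (d • V) = SR γ U V := by
  simp only [SR, alphaPlus, vel_smul, sound_smul, hc, hd, ne_eq, not_false_eq_true]

lemma neg_le_SL {α : ℝ} (hU : alphaMax γ U ≤ α) (hV : alphaMax γ V ≤ α) : -α ≤ SL γ U V := by
  have hU' := neg_abs_le (vel U)
  have hV' := neg_abs_le (vel V)
  rw [alphaMax] at hU hV
  exact le_min (by rw [alphaMinus]; linarith) (by rw [alphaMinus]; linarith)

lemma SR_le {α : ℝ} (hU : alphaMax γ U ≤ α) (hV : alphaMax γ V ≤ α) : SR γ U V ≤ α := by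
  have hU' := le_abs_self (vel U)
  have hV' := le_abs_self (vel V)
  rw [alphaMax] at hU hV
  exact max_le (by rw [alphaPlus]; linarith) (by rw [alphaPlus]; linarith)

end Thermodynamics

section HLLC

variable {γ : ℝ} {UL UR : St}

lemma Sstar_denom_neg (hγ : 1 < γ) (hL : UL ∈ admG) (hR : UR ∈ admG) :
    UL.1 * (SL γ UL UR - vel UL) - UR.1 * (SR γ UL UR - vel UR) < 0 := by
  have hsl : SL γ UL UR ≤ vel UL - sound γ UL := min_le_left _ _
  have hsr : vel UR + sound γ UR ≤ SR γ UL UR := le_max_right _ _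
  have hcL := sound_pos hγ hL
  have hcR := sound_pos hγ hR
  nlinarith [hL.1, hR.1]

lemma SL_lt_Sstar (hγ : 1 < γ) (hL : UL ∈ admG) (hR : UR ∈ admG) :
    SL γ UL UR < Sstar γ UL UR := by
  have hsl : SL γ UL UR ≤ vel UR - sound γ UR := min_le_right _ _
  have hsr : vel UR + sound γ UR ≤ SR γ UL UR := le_max_right _ _
  have hcR := sound_pos hγ hR
  have hfan : sound γ UR * sound γ UR ≤ (SR γ UL UR - vel UR) * (vel UR - SL γ UL UR) :=
    mul_le_mul (by linarith) (by linarith) hcR.le (by linarith)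
  rw [Sstar, lt_div_iff_of_neg (Sstar_denom_neg hγ hL hR)]
  nlinarith [mul_le_mul_of_nonneg_left hfan hR.1.le, mul_sound_sq hγ hR, press_pos hγ hL,
    press_pos hγ hR, mul_nonneg hL.1.le (sq_nonneg (SL γ UL UR - vel UL))]

lemma Sstar_lt_SR (hγ : 1 < γ) (hL : UL ∈ admG) (hR : UR ∈ admG) :
    Sstar γ UL UR < SR γ UL UR := by
  have hsl : SL γ UL UR ≤ vel UL - sound γ UL := min_le_left _ _
  have hsr : vel UL + sound γ UL ≤ SR γ UL UR := le_max_left _ _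
  have hcL := sound_pos hγ hL
  have hfan : sound γ UL * sound γ UL ≤ (vel UL - SL γ UL UR) * (SR γ UL UR - vel UL) :=
    mul_le_mul (by linarith) (by linarith) hcL.le (by linarith)
  rw [Sstar, div_lt_iff_of_neg (Sstar_denom_neg hγ hL hR)]
  nlinarith [mul_le_mul_of_nonneg_left hfan hL.1.le, mul_sound_sq hγ hL, press_pos hγ hL,
    press_pos hγ hR, mul_nonneg hR.1.le (sq_nonneg (SR γ UL UR - vel UR))]

lemma Ustar_mem (hγ : 1 < γ) {U : St} (hU : U ∈ admG) {S Sst : ℝ}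
    (hS : sound γ U ≤ |S - vel U|) (hρ : 0 < (S - vel U) / (S - Sst)) :
    Ustar γ S Sst U ∈ admG := by
  have ha : S - vel U ≠ 0 := by rintro h; simp [h] at hρ
  have he : 0 < specE U := (mem_admG_iff.1 hU).2
  have hE : U.2.2 / U.1 = specE U + vel U ^ 2 / 2 := by
    rw [specE, vel]; field_simp [hU.1.ne']; ring
  have hp : press γ U / (U.1 * (S - vel U)) = (γ - 1) * specE U / (S - vel U) := by
    rw [press_eq_mul_specE hU]; field_simp [hU.1.ne']
  have hsq : γ * (γ - 1) * specE U ≤ (S - vel U) ^ 2 := by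
    rw [← sound_sq hγ hU, ← sq_abs (S - vel U)]
    exact pow_le_pow_left₀ (sound_pos hγ hU).le hS 2
  refine admG_smul (mul_pos hU.1 hρ) ⟨one_pos, ?_⟩
  show 0 < U.2.2 / U.1 + (Sst - vel U) * (Sst + press γ U / (U.1 * (S - vel U)))
    - Sst ^ 2 / (2 * 1)
  rw [hE, hp]
  -- completing the square in `Sst - vel U`
  have key : (specE U + vel U ^ 2 / 2 + (Sst - vel U) * (Sst + (γ - 1) * specE U / (S - vel U))
      - Sst ^ 2 / (2 * 1)) * (2 * (S - vel U) ^ 2)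
      = ((Sst - vel U) * (S - vel U) + (γ - 1) * specE U) ^ 2
        + (2 * specE U * (S - vel U) ^ 2 - (γ - 1) ^ 2 * specE U ^ 2) := by
    field_simp; ring
  refine pos_of_mul_pos_left ?_ (by positivity : (0 : ℝ) ≤ 2 * (S - vel U) ^ 2)
  rw [key]
  nlinarith [sq_nonneg ((Sst - vel U) * (S - vel U) + (γ - 1) * specE U),
    mul_le_mul_of_nonneg_left hsq (by positivity : (0 : ℝ) ≤ 2 * specE U), mul_pos he he]

lemma Ustar_left_mem (hγ : 1 < γ) (hL : UL ∈ admG) (hR : UR ∈ admG) :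
    Ustar γ (SL γ UL UR) (Sstar γ UL UR) UL ∈ admG := by
  have hsl : SL γ UL UR ≤ vel UL - sound γ UL := min_le_left _ _
  refine Ustar_mem hγ hL ?_ (div_pos_of_neg_of_neg ?_ (sub_neg.2 (SL_lt_Sstar hγ hL hR)))
  · rw [abs_sub_comm]
    exact (by linarith : sound γ UL ≤ vel UL - SL γ UL UR).trans (le_abs_self _)
  · linarith [sound_pos hγ hL]

lemma Ustar_right_mem (hγ : 1 < γ) (hL : UL ∈ admG) (hR : UR ∈ admG) :
    Ustar γ (SR γ UL UR) (Sstar γ UL UR) UR ∈ admG := by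
  have hsr : vel UR + sound γ UR ≤ SR γ UL UR := le_max_right _ _
  refine Ustar_mem hγ hR ?_ (div_pos ?_ (sub_pos.2 (Sstar_lt_SR hγ hL hR)))
  · exact (by linarith : sound γ UR ≤ SR γ UL UR - vel UR).trans (le_abs_self _)
  · linarith [sound_pos hγ hR]

noncomputable def pStar (γ S Sst : ℝ) (U : St) : ℝ :=
  press γ U + U.1 * (S - vel U) * (Sst - vel U)

lemma Fstar_eq {S Sst : ℝ} {U : St} (hρ : U.1 ≠ 0) (ha : S - vel U ≠ 0) (hb : S - Sst ≠ 0) :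
    Fstar γ S Sst U = ((Ustar γ S Sst U).1 * Sst,
      (Ustar γ S Sst U).1 * Sst ^ 2 + pStar γ S Sst U,
      ((Ustar γ S Sst U).2.2 + pStar γ S Sst U) * Sst) := by
  obtain ⟨ρ, m, E⟩ := U
  dsimp only at hρ
  obtain ⟨u, rfl⟩ : ∃ u, m = ρ * u := ⟨m / ρ, by field_simp⟩
  have hu : vel (ρ, ρ * u, E) = u := mul_div_cancel_left₀ u hρ
  rw [hu] at ha
  simp only [Fstar, Ustar, eulerF, pStar, hu, Prod.smul_mk, Prod.mk_add_mk, Prod.mk_sub_mk,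
    smul_eq_mul, Prod.mk.injEq]
  refine ⟨?_, ?_, ?_⟩ <;> field_simp <;> ring

lemma pStar_left_eq_right (hγ : 1 < γ) (hL : UL ∈ admG) (hR : UR ∈ admG) :
    pStar γ (SL γ UL UR) (Sstar γ UL UR) UL = pStar γ (SR γ UL UR) (Sstar γ UL UR) UR := by
  have h := div_mul_cancel₀ (press γ UR - press γ UL + UL.1 * vel UL * (SL γ UL UR - vel UL)
      - UR.1 * vel UR * (SR γ UL UR - vel UR)) (Sstar_denom_neg hγ hL hR).ne
  rw [← Sstar] at h
  rw [pStar, pStar]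
  linear_combination h

lemma Fstar_right_eq (hγ : 1 < γ) (hL : UL ∈ admG) (hR : UR ∈ admG) :
    Fstar γ (SR γ UL UR) (Sstar γ UL UR) UR = Fstar γ (SL γ UL UR) (Sstar γ UL UR) UL
      + Sstar γ UL UR • (Ustar γ (SR γ UL UR) (Sstar γ UL UR) UR
        - Ustar γ (SL γ UL UR) (Sstar γ UL UR) UL) := by
  have hsl : SL γ UL UR ≤ vel UL - sound γ UL := min_le_left _ _
  have hsr : vel UR + sound γ UR ≤ SR γ UL UR := le_max_right _ _
  have hp := pStar_left_eq_right hγ hL hR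
  rw [Fstar_eq hL.1.ne' (by linarith [sound_pos hγ hL]) (sub_ne_zero.2 (SL_lt_Sstar hγ hL hR).ne),
    Fstar_eq hR.1.ne' (by linarith [sound_pos hγ hR]) (sub_ne_zero.2 (Sstar_lt_SR hγ hL hR).ne')]
  simp only [Ustar, Prod.smul_mk, Prod.mk_add_mk, Prod.mk_sub_mk, smul_eq_mul, Prod.mk.injEq]
  refine ⟨by ring, by linear_combination -hp, by linear_combination -Sstar γ UL UR * hp⟩

lemma eulerF_right_eq (hγ : 1 < γ) (hL : UL ∈ admG) (hR : UR ∈ admG) :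
    eulerF γ UR = eulerF γ UL
      + SL γ UL UR • (Ustar γ (SL γ UL UR) (Sstar γ UL UR) UL - UL)
      + Sstar γ UL UR • (Ustar γ (SR γ UL UR) (Sstar γ UL UR) UR
        - Ustar γ (SL γ UL UR) (Sstar γ UL UR) UL)
      + SR γ UL UR • (UR - Ustar γ (SR γ UL UR) (Sstar γ UL UR) UR) := by
  have h := Fstar_right_eq hγ hL hR
  simp only [Fstar] at h
  linear_combination (norm := module) h

theorem Fhllc_left_mem (hγ : 1 < γ) (hL : UL ∈ admG) (hR : UR ∈ admG) {α : ℝ} (hα : 0 < α)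
    (hSL : -α ≤ SL γ UL UR) : α • UL - (Fhllc γ UL UR - eulerF γ UL) ∈ admG :=
  fanFlux_left_mem (C := admCone) hL (Ustar_left_mem hγ hL hR) (Ustar_right_mem hγ hL hR) hR
    (SL_lt_Sstar hγ hL hR).le (Sstar_lt_SR hγ hL hR).le (eulerF_right_eq hγ hL hR) hα hSL

theorem Fhllc_right_mem (hγ : 1 < γ) (hL : UL ∈ admG) (hR : UR ∈ admG) {α : ℝ} (hα : 0 < α)
    (hSR : SR γ UL UR ≤ α) : α • UR - (eulerF γ UR - Fhllc γ UL UR) ∈ admG :=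
  fanFlux_right_mem (C := admCone) hL (Ustar_left_mem hγ hL hR) (Ustar_right_mem hγ hL hR) hR
    (SL_lt_Sstar hγ hL hR).le (Sstar_lt_SR hγ hL hR) (eulerF_right_eq hγ hL hR) hα hSR

variable {U V : St} {c d α : ℝ}

theorem Fhllc_smul_left_mem (hγ : 1 < γ) (hU : U ∈ admG) (hV : V ∈ admG) (hc : 0 < c)
    (hd : 0 < d) (hUα : alphaMax γ U ≤ α) (hVα : alphaMax γ V ≤ α) :
    α • c • U - (Fhllc γ (c • U) (d • V) - c • eulerF γ U) ∈ admG := by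
  rw [← eulerF_smul hc.ne']
  refine Fhllc_left_mem hγ (admG_smul hc hU) (admG_smul hd hV)
    ((alphaMax_pos hγ hU).trans_le hUα) ?_
  rw [SL_smul hc.ne' hd.ne']
  exact neg_le_SL hUα hVα

theorem Fhllc_smul_right_mem (hγ : 1 < γ) (hU : U ∈ admG) (hV : V ∈ admG) (hc : 0 < c)
    (hd : 0 < d) (hUα : alphaMax γ U ≤ α) (hVα : alphaMax γ V ≤ α) :
    α • d • V - (d • eulerF γ V - Fhllc γ (c • U) (d • V)) ∈ admG := by
  rw [← eulerF_smul hd.ne']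
  refine Fhllc_right_mem hγ (admG_smul hc hU) (admG_smul hd hV)
    ((alphaMax_pos hγ hU).trans_le hUα) ?_
  rw [SR_smul hc.ne' hd.ne']
  exact SR_le hUα hVα

end HLLC

section Source

variable {γ : ℝ} {U : St}

lemma source_mem_of_lt (hU : U ∈ admG) {c ν k : ℝ}
    (hν : |ν| * |press γ U - k * U.1| < (c - ν * vel U) * (U.1 * √(2 * specE U))) :
    c • U - ν • (eulerF γ U - k • ((0 : ℝ), U.1, U.2.1)) ∈ admG := by
  have hs : (U.1 * √(2 * specE U)) ^ 2 = 2 * U.1 * (U.2.2 - U.2.1 ^ 2 / (2 * U.1)) := by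
    rw [mul_pow, Real.sq_sqrt (by linarith [(mem_admG_iff.1 hU).2]), specE]
    field_simp [hU.1.ne']
  have hcu : 0 < c - ν * vel U :=
    pos_of_mul_pos_left ((mul_nonneg (abs_nonneg _) (abs_nonneg _)).trans_lt hν)
      (mul_nonneg hU.1.le (Real.sqrt_nonneg _))
  have hsq : (ν * (press γ U - k * U.1)) ^ 2
      < (c - ν * vel U) ^ 2 * (2 * U.1 * (U.2.2 - U.2.1 ^ 2 / (2 * U.1))) := by
    rw [← hs, ← mul_pow, ← sq_abs, abs_mul]
    exact pow_lt_pow_left₀ hν (by positivity) two_ne_zero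
  obtain ⟨ρ, m, E⟩ := U
  obtain ⟨hρ, he⟩ := hU
  dsimp only at hρ he hcu hsq ⊢
  obtain ⟨u, rfl⟩ : ∃ u, m = ρ * u := ⟨m / ρ, by field_simp⟩
  have hu : vel (ρ, ρ * u, E) = u := mul_div_cancel_left₀ u hρ.ne'
  rw [hu] at hcu hsq
  simp only [eulerF, hu, Prod.smul_mk, Prod.mk_sub_mk, smul_eq_mul]
  refine ⟨by nlinarith, ?_⟩
  dsimp only
  have key : c * E - ν * ((E + press γ (ρ, ρ * u, E)) * u - k * (ρ * u))
      - (c * (ρ * u) - ν * (ρ * u ^ 2 + press γ (ρ, ρ * u, E) - k * ρ)) ^ 2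
        / (2 * (c * ρ - ν * (ρ * u - k * 0)))
      = ((c - ν * u) ^ 2 * (2 * ρ * (E - (ρ * u) ^ 2 / (2 * ρ)))
          - (ν * (press γ (ρ, ρ * u, E) - k * ρ)) ^ 2) / (2 * ρ * (c - ν * u)) := by
    rw [show c * ρ - ν * (ρ * u - k * 0) = ρ * (c - ν * u) by ring]
    field_simp
    ring
  rw [key]
  exact div_pos (by linarith) (by positivity)

theorem source_mem (hγ : 1 < γ) (hU : U ∈ admG) {c ν k : ℝ}
    (hν : |ν| * (alphaMax γ U + |k| / √(2 * specE U)) < c) :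
    c • U - ν • (eulerF γ U - k • ((0 : ℝ), U.1, U.2.1)) ∈ admG := by
  have hs : 0 < √(2 * specE U) := Real.sqrt_pos.2 (by linarith [(mem_admG_iff.1 hU).2])
  refine source_mem_of_lt hU ?_
  calc |ν| * |press γ U - k * U.1|
      ≤ |ν| * (U.1 * √(2 * specE U) * sound γ U + |k| * U.1) := by
        gcongr
        calc |press γ U - k * U.1| ≤ |press γ U| + |k * U.1| := abs_sub _ _
          _ = press γ U + |k| * U.1 := by
            rw [abs_of_pos (press_pos hγ hU), abs_mul, abs_of_pos hU.1]
          _ ≤ _ := by grw [press_le_mul_sound hγ hU]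
    _ = (|ν| * (alphaMax γ U + |k| / √(2 * specE U)) - |ν| * |vel U|)
          * (U.1 * √(2 * specE U)) := by
        rw [alphaMax]; field_simp; ring
    _ < (c - |ν| * |vel U|) * (U.1 * √(2 * specE U)) := by
        gcongr
        exact mul_pos hU.1 hs
    _ ≤ (c - ν * vel U) * (U.1 * √(2 * specE U)) := by
        refine mul_le_mul_of_nonneg_right (sub_le_sub_left ?_ c) (mul_pos hU.1 hs).le
        rw [← abs_mul]
        exact le_abs_self _

lemma source_cfl {pstl pstr pej ρej Δt h α a s : ℝ} (hpstl : 0 < pstl) (hpstr : 0 < pstr)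
    (hpej : 0 < pej) (hρej : 0 < ρej) (hΔt : 0 < Δt) (hh : 0 < h) (hα : 0 < α) (ha : a ≤ α)
    (hs : 0 < s) (hcfl : (2 * ((pstr + pstl) / pej) * α + |pstr - pstl| / (ρej * s)) * Δt ≤ h) :
    |Δt / h * ((pstr - pstl) / pej)| * (a + |pej / ρej| / s)
      < 1 - Δt / h * ((pstr + pstl) / pej) * α := by
  have hτ : 0 < Δt / h := div_pos hΔt hh
  have hΔ : |pstr - pstl| < pstr + pstl := abs_sub_lt_iff.2 ⟨by linarith, by linarith⟩
  have hcfl' : Δt / h * (2 * ((pstr + pstl) / pej) * α + |pstr - pstl| / (ρej * s)) ≤ 1 := by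
    rw [div_mul_eq_mul_div, div_le_one hh]; linarith
  rw [abs_mul, abs_of_pos hτ, abs_div, abs_div, abs_of_pos hpej, abs_of_pos hρej]
  calc Δt / h * (|pstr - pstl| / pej) * (a + pej / ρej / s)
      ≤ Δt / h * (|pstr - pstl| / pej) * (α + pej / ρej / s) := by gcongr
    _ = Δt / h * (|pstr - pstl| / pej) * α + Δt / h * (|pstr - pstl| / (ρej * s)) := by
        field_simp
    _ < Δt / h * ((pstr + pstl) / pej) * α + Δt / h * (|pstr - pstl| / (ρej * s)) := by
        gcongr
    _ ≤ 1 - Δt / h * ((pstr + pstl) / pej) * α := by linarith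

end Source

/-- Theorem 3.2: positivity of the first-order 1D well-balanced
DG scheme with gravity source term. -/
theorem first_order_WB_positivity (γ : ℝ) (hγ : 1 < γ)
    (Ujm Uj Ujp : St) (hUjm : Ujm ∈ admG) (hUj : Uj ∈ admG) (hUjp : Ujp ∈ admG)
    (pejm pej pejp : ℝ) (hpejm : 0 < pejm) (hpej : 0 < pej) (hpejp : 0 < pejp)
    (pstl pstr : ℝ) (hpstl : 0 < pstl) (hpstr : 0 < pstr)
    (ρej : ℝ) (hρej : 0 < ρej)
    (Δt h : ℝ) (hΔt : 0 < Δt) (hh : 0 < h)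
    (hcfl :
      (2 * ((pstr + pstl) / pej) *
          max (alphaMax γ Ujm) (max (alphaMax γ Uj) (alphaMax γ Ujp))
        + |pstr - pstl| / (ρej * Real.sqrt (2 * specE Uj))) * Δt ≤ h) :
    Uj - (Δt / h) •
        (Fhllc γ ((pstr / pej) • Uj) ((pstr / pejp) • Ujp)
          - Fhllc γ ((pstl / pejm) • Ujm) ((pstl / pej) • Uj))
      + Δt • (((pstr - pstl) / (h * ρej)) • (((0 : ℝ), Uj.1, Uj.2.1) : St)) ∈ admG := by
  set α := max (alphaMax γ Ujm) (max (alphaMax γ Uj) (alphaMax γ Ujp))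
  have hαjm : alphaMax γ Ujm ≤ α := le_max_left _ _
  have hαj : alphaMax γ Uj ≤ α := (le_max_left _ _).trans (le_max_right _ _)
  have hαjp : alphaMax γ Ujp ≤ α := (le_max_right _ _).trans (le_max_right _ _)
  have hright :=
    Fhllc_smul_left_mem hγ hUj hUjp (div_pos hpstr hpej) (div_pos hpstr hpejp) hαj hαjp
  have hleft :=
    Fhllc_smul_right_mem hγ hUjm hUj (div_pos hpstl hpejm) (div_pos hpstl hpej) hαjm hαj
  have hsource := source_mem hγ hUj (k := pej / ρej) <|
    source_cfl hpstl hpstr hpej hρej hΔt hh ((alphaMax_pos hγ hUj).trans_le hαj) hαj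
      (Real.sqrt_pos.2 (by linarith [(mem_admG_iff.1 hUj).2])) hcfl
  have hτ : 0 < Δt / h := div_pos hΔt hh
  convert admG_add (admG_add (admG_smul hτ hright) (admG_smul hτ hleft)) hsource using 1
  match_scalars <;> field_simp <;> ring
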